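/- arXiv:2406.05218 — 2 statements merged into one kernel-verified Lean document; each statement's English description precedes it below -/
import Mathlib

section
/- Let (W,S) be a Coxeter system of rank n with reflection set R, and let W_n be the universal Coxeter group on the same generating set (all m_{ij} = ∞) with reflection set R_n. For any element v ∈ W represented by an S-reduced word s ∈ S*, one has l_R(v) ≤ l_{R_n}(ω_n(s)), where ω_n(s) denotes the element of W_n represented by s. -/
open CoxeterSystem

/-- Word length of `g` with respect to a generating set `R` (whose elements are involutions,
so inverses are not needed). -/
noncomputable def lenWrt {W : Type*} [Group W] (R : Set W) (g : W) : ℕ :=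
  sInf {n | ∃ l : List W, (∀ x ∈ l, x ∈ R) ∧ l.length = n ∧ l.prod = g}

/-- Reflection length in a Coxeter system. -/
noncomputable def rLen {B W : Type*} [Group W] {M : CoxeterMatrix B}
    (cs : CoxeterSystem M W) (w : W) : ℕ :=
  lenWrt {t | cs.IsReflection t} w

/-- The universal Coxeter matrix: all off-diagonal entries are `∞` (encoded as `0`). -/
def univMat (B : Type*) [DecidableEq B] : CoxeterMatrix B where
  M := Matrix.of fun i j => if i = j then 1 else 0
  isSymm := by
    ext i j
    simp [Matrix.transpose_apply, eq_comm]
  diagonal := fun i => by simp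
  off_diagonal := fun i j h => by simp [h]

/-!
Sending each simple reflection of the universal Coxeter group `W_n` to the corresponding one of
`W` respects all (vacuous) braid relations of `W_n`, so it extends to a homomorphism
`W_n →* W` mapping `ω_n(s)` to `ω(s)`. A homomorphism that sends simple reflections to simple
reflections sends reflections `w s_i w⁻¹` to reflections, hence a factorisation of `ω_n(s)`
into `k` reflections maps to a factorisation of `ω(s)` into `k` reflections.
-/

section lenWrt

variable {G H : Type*} [Group G] [Group H]

theorem lenWrt_prod_le_length {R : Set G} {l : List G} (hl : ∀ x ∈ l, x ∈ R) :
    lenWrt R l.prod ≤ l.length :=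
  Nat.sInf_le ⟨l, hl, rfl, rfl⟩

theorem exists_length_eq_lenWrt {R : Set G} {g : G} (hg : g ∈ Submonoid.closure R) :
    ∃ l : List G, (∀ x ∈ l, x ∈ R) ∧ l.length = lenWrt R g ∧ l.prod = g := by
  obtain ⟨l, hl, rfl⟩ := Submonoid.exists_list_of_mem_closure hg
  have hne : {n | ∃ l' : List G, (∀ x ∈ l', x ∈ R) ∧ l'.length = n ∧ l'.prod = l.prod}.Nonempty :=
    ⟨l.length, l, hl, rfl, rfl⟩
  exact Nat.sInf_mem hne

theorem lenWrt_map_le (f : G →* H) {R : Set G} {R' : Set H} (hR : Set.MapsTo f R R') {g : G}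
    (hg : g ∈ Submonoid.closure R) : lenWrt R' (f g) ≤ lenWrt R g := by
  obtain ⟨l, hl, hlen, rfl⟩ := exists_length_eq_lenWrt hg
  have hmap : ∀ y ∈ l.map f, y ∈ R' := List.forall_mem_map.2 fun x hx => hR (hl x hx)
  calc lenWrt R' (f l.prod) = lenWrt R' (l.map f).prod := by rw [map_list_prod]
    _ ≤ (l.map f).length := lenWrt_prod_le_length hmap
    _ = lenWrt R l.prod := by rw [List.length_map, hlen]

end lenWrt

theorem univMat_isLiftable {B G : Type*} [DecidableEq B] [Monoid G] {f : B → G}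
    (hf : ∀ i, f i * f i = 1) : (univMat B).IsLiftable f := by
  intro i j
  by_cases h : i = j
  · subst h
    simp [univMat, hf]
  · simp [univMat, h]

namespace CoxeterSystem

variable {B W W' : Type*} [Group W] [Group W'] {M M' : CoxeterMatrix B}
  (cs : CoxeterSystem M W) (cs' : CoxeterSystem M' W')

theorem mem_closure_isReflection (w : W) : w ∈ Submonoid.closure {t | cs.IsReflection t} := by
  have hsimple : Set.range cs.simple ⊆ {t | cs.IsReflection t} := by
    rintro _ ⟨i, rfl⟩
    exact cs.isReflection_simple i
  exact Submonoid.closure_mono hsimple (cs.submonoid_closure_range_simple ▸ Submonoid.mem_top w)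

def univLift [DecidableEq B] : (univMat B).Group →* W :=
  (univMat B).toCoxeterSystem.lift ⟨cs.simple, univMat_isLiftable cs.simple_mul_simple_self⟩

theorem univLift_simple [DecidableEq B] (i : B) :
    cs.univLift ((univMat B).toCoxeterSystem.simple i) = cs.simple i :=
  (univMat B).toCoxeterSystem.lift_apply_simple _ i

section map

variable {cs cs'} {φ : W →* W'} (hφ : ∀ i, φ (cs.simple i) = cs'.simple i)
include hφ

theorem IsReflection.map {t : W} (ht : cs.IsReflection t) : cs'.IsReflection (φ t) := by
  obtain ⟨w, i, rfl⟩ := ht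
  exact ⟨φ w, i, by rw [map_mul, map_mul, map_inv, hφ]⟩

theorem map_wordProd (ω : List B) : φ (cs.wordProd ω) = cs'.wordProd ω := by
  simp only [wordProd, map_list_prod, List.map_map, Function.comp_def, hφ]

theorem rLen_map_le (w : W) : rLen cs' (φ w) ≤ rLen cs w :=
  lenWrt_map_le φ (fun _ ht => IsReflection.map hφ ht) (cs.mem_closure_isReflection w)

end map

end CoxeterSystem

theorem reflection_length_le_universal_general {B W : Type*} [DecidableEq B] [Group W]
    {M : CoxeterMatrix B} (cs : CoxeterSystem M W) (v : W) (s : List B)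
    (hv : cs.wordProd s = v) :
    rLen cs v ≤ rLen (univMat B).toCoxeterSystem ((univMat B).toCoxeterSystem.wordProd s) := by
  rw [← hv, ← map_wordProd cs.univLift_simple]
  exact rLen_map_le cs.univLift_simple _

/-- The reflection length of an element represented by an `S`-reduced word is at most the
reflection length of the element represented by the same word in the universal Coxeter
group on the same generators. -/
theorem reflection_length_le_universal {B W : Type*} [DecidableEq B] [Group W]
    {M : CoxeterMatrix B} (cs : CoxeterSystem M W) (v : W) (s : List B)
    (hred : cs.IsReduced s) (hv : cs.wordProd s = v) :
    rLen cs v ≤ rLen (univMat B).toCoxeterSystem ((univMat B).toCoxeterSystem.wordProd s) :=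
  reflection_length_le_universal_general cs v s hv
end

section
/- Let W be the single braided Coxeter group of rank n ≥ 4 with all off-diagonal Coxeter matrix entries equal to k ≥ 3, generated by s₁,…,s_n. Then for all λ ∈ ℕ₀ and 1 ≤ r ≤ n, l_R(ω((s₁⋯s_n)^λ s₁⋯s_r)) ≤ λ(n − 2) + r − 2·1_{(λ + 1_{r≥2}) ≥ k}·(1 + ⌊(λ − k + 1_{r≥2})/(k − 1)⌋). -/
open CoxeterSystem

/-!
Write `s₁⋯sₙ = X Y v` with `X = s₁s₂`, `Y = s₃s₄` (both of order dividing `k`) and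
`v = s₅⋯sₙ`. Moving the copies of `v` to the right shows that `(s₁⋯sₙ)^λ` and `(XY)^λ`
differ by `λ` conjugates of `v`, i.e. by at most `λ(n-4)` reflections. Every power of a
product of two simple reflections is a product of two reflections
(`(sᵢsⱼ)^m = ((sᵢsⱼ)^m sᵢ) · sᵢ`), so `(XY)^L X` is a product of `2L + 2` reflections.
Two are saved for every `k - 1` factors: since `X^(k-1) = X⁻¹`,
`(XY)^(L+k-1) X = ((XY)^(k-2) X^(-(k-2))) · X⁻¹ ((YX)^L Y) X`,
where the first factor is a product of `k - 2` conjugates of `Y` and the second is conjugate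
to the same expression with `X` and `Y` exchanged. For `r = 1`, conjugating by `s₁` turns
`(XY)^λ s₁` into `s₂ (YX)^(λ-1) Y`.
-/

namespace CoxeterSystem

variable {B W : Type*} [Group W] {M : CoxeterMatrix B} (cs : CoxeterSystem M W)

theorem rLen_list_prod_le {l : List W} (hl : ∀ t ∈ l, cs.IsReflection t) :
    rLen cs l.prod ≤ l.length :=
  Nat.sInf_le ⟨l, hl, rfl, rfl⟩

theorem exists_list_prod_eq_of_rLen (g : W) :
    ∃ l : List W, (∀ t ∈ l, cs.IsReflection t) ∧ l.length = rLen cs g ∧ l.prod = g := by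
  obtain ⟨ω, rfl⟩ := cs.wordProd_surjective g
  have hne : {m | ∃ l : List W, (∀ t ∈ l, t ∈ {t | cs.IsReflection t}) ∧ l.length = m ∧
      l.prod = cs.wordProd ω}.Nonempty :=
    ⟨_, ω.map cs.simple, by simpa using fun i _ => cs.isReflection_simple i, rfl, rfl⟩
  exact Nat.sInf_mem hne

theorem rLen_one : rLen cs 1 = 0 :=
  Nat.le_zero.mp (cs.rLen_list_prod_le (l := []) (by simp))

theorem rLen_mul_le (x y : W) : rLen cs (x * y) ≤ rLen cs x + rLen cs y := by
  obtain ⟨l₁, h₁, hl₁, rfl⟩ := cs.exists_list_prod_eq_of_rLen x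
  obtain ⟨l₂, h₂, hl₂, rfl⟩ := cs.exists_list_prod_eq_of_rLen y
  have h := cs.rLen_list_prod_le (l := l₁ ++ l₂) (by simp only [List.mem_append]; grind)
  simpa [hl₁, hl₂] using h

theorem rLen_conj_le (w x : W) : rLen cs (w * x * w⁻¹) ≤ rLen cs x := by
  obtain ⟨l, hl, hlen, rfl⟩ := cs.exists_list_prod_eq_of_rLen x
  have h := cs.rLen_list_prod_le (l := l.map (MulAut.conj w))
    (by simpa using fun t ht => (hl t ht).conj w)
  simpa [← map_list_prod, hlen] using h

theorem rLen_conj (w x : W) : rLen cs (w * x * w⁻¹) = rLen cs x := by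
  refine le_antisymm (cs.rLen_conj_le w x) ?_
  simpa [mul_assoc] using cs.rLen_conj_le w⁻¹ (w * x * w⁻¹)

theorem rLen_mul_comm (x y : W) : rLen cs (x * y) = rLen cs (y * x) := by
  simpa [mul_assoc] using (cs.rLen_conj y (x * y)).symm

theorem rLen_wordProd_le (ω : List B) : rLen cs (cs.wordProd ω) ≤ ω.length := by
  simpa [wordProd] using cs.rLen_list_prod_le (l := ω.map cs.simple)
    (by simpa using fun i _ => cs.isReflection_simple i)

theorem rLen_simple_le (i : B) : rLen cs (cs.simple i) ≤ 1 := by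
  simpa using cs.rLen_wordProd_le [i]

theorem isReflection_simple_mul_simple_pow_mul (m : ℕ) (i j : B) :
    cs.IsReflection ((cs.simple i * cs.simple j) ^ m * cs.simple i) := by
  induction m generalizing i j with
  | zero => simpa using cs.isReflection_simple i
  | succ m ih =>
    convert (ih j i).conj (cs.simple i) using 1
    rw [cs.inv_simple, mul_pow_mul, pow_succ]
    simp only [mul_assoc]

theorem rLen_simple_mul_simple_pow_le (i j : B) (m : ℕ) :
    rLen cs ((cs.simple i * cs.simple j) ^ m) ≤ 2 := by
  have h := cs.rLen_list_prod_le
    (l := [(cs.simple i * cs.simple j) ^ m * cs.simple i, cs.simple i])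
    (by simpa using ⟨cs.isReflection_simple_mul_simple_pow_mul m i j, cs.isReflection_simple i⟩)
  simpa [mul_assoc] using h

theorem rLen_mul_pow_mul_inv_pow_le (x y : W) (L : ℕ) :
    rLen cs ((x * y) ^ L * (x ^ L)⁻¹) ≤ L * rLen cs y := by
  induction L with
  | zero => simp [rLen_one]
  | succ L ih =>
    have h : (x * y) ^ (L + 1) * (x ^ (L + 1))⁻¹
        = (x * y) ^ L * (x ^ L)⁻¹ * (x ^ (L + 1) * y * (x ^ (L + 1))⁻¹) := by
      simp only [pow_succ, mul_inv_rev, mul_assoc, inv_mul_cancel_left]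
    rw [h, add_one_mul]
    grw [cs.rLen_mul_le, ih, cs.rLen_conj]

theorem rLen_mul_pow_mul_le (x y : W) (L : ℕ) :
    rLen cs ((x * y) ^ L * x) ≤ L * rLen cs y + rLen cs (x ^ (L + 1)) := by
  have h : (x * y) ^ L * x = (x * y) ^ L * (x ^ L)⁻¹ * x ^ (L + 1) := by
    simp [pow_succ, mul_assoc]
  rw [h]
  grw [cs.rLen_mul_le, cs.rLen_mul_pow_mul_inv_pow_le]

theorem rLen_mul_pow_mul_add_two_mul_div_le {k : ℕ} (hk : 2 ≤ k) {x y : W}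
    (hxk : x ^ k = 1) (hyk : y ^ k = 1) (hx : ∀ m, rLen cs (x ^ m) ≤ 2)
    (hy : ∀ m, rLen cs (y ^ m) ≤ 2) (L : ℕ) :
    rLen cs ((x * y) ^ L * x) + 2 * (L / (k - 1)) ≤ 2 * L + 2 := by
  induction L using Nat.strong_induction_on generalizing x y with
  | _ L IH =>
  have hy_le : rLen cs y ≤ 2 := by simpa using hy 1
  obtain hL | hL := lt_or_ge L (k - 1)
  · rw [Nat.div_eq_of_lt hL]
    grw [cs.rLen_mul_pow_mul_le, hy_le, hx]
    omega
  obtain ⟨L, rfl⟩ : ∃ L', L = L' + (k - 1) := ⟨L - (k - 1), by omega⟩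
  have hx_inv : x ^ (k - 1) = x⁻¹ :=
    eq_inv_of_mul_eq_one_left (by rw [← pow_succ, Nat.sub_add_cancel (by omega), hxk])
  have hx_inv_pow : (x ^ (k - 2))⁻¹ * x⁻¹ = x := by
    rw [← hx_inv, show k - 1 = k - 2 + 1 by omega, pow_succ, inv_mul_cancel_left]
  have hfold : (x * y) ^ (L + (k - 1)) * x
      = (x * y) ^ (k - 2) * (x ^ (k - 2))⁻¹ * (x⁻¹ * ((y * x) ^ L * y) * x⁻¹⁻¹) := by
    calc (x * y) ^ (L + (k - 1)) * x = (x * y) ^ (k - 2) * ((x * y) ^ (L + 1) * x) := by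
          rw [← mul_assoc, ← pow_add]; congr 2; omega
      _ = _ := by
          rw [inv_inv, mul_pow_mul, pow_succ]
          simp only [mul_assoc]
          rw [← mul_assoc (x ^ (k - 2))⁻¹, hx_inv_pow]
  rw [hfold, Nat.add_div_right _ (by omega)]
  grw [cs.rLen_mul_le, cs.rLen_conj, cs.rLen_mul_pow_mul_inv_pow_le, hy_le]
  have := IH L (by omega) hyk hxk hy hx
  omega

theorem rLen_mul_pow_succ_mul_add_two_mul_div_le {k : ℕ} (hk : 2 ≤ k) {x y : W}
    (hxk : x ^ k = 1) (hyk : y ^ k = 1) (hx : ∀ m, rLen cs (x ^ m) ≤ 2)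
    (hy : ∀ m, rLen cs (y ^ m) ≤ 2) {s t : W} (hst : s * x = t) (L : ℕ) :
    rLen cs ((x * y) ^ (L + 1) * s) + 2 * (L / (k - 1)) ≤ 2 * L + 2 + rLen cs t := by
  rw [rLen_mul_comm, pow_succ', ← mul_assoc, ← mul_assoc, hst, mul_assoc, ← mul_pow_mul]
  grw [cs.rLen_mul_le]
  have := cs.rLen_mul_pow_mul_add_two_mul_div_le hk hyk hxk hy hx L
  omega

theorem rLen_mul_pow_mul_wordProd_take_add_le {k : ℕ} (hk : 2 ≤ k) {a b : B} (hab : M a b = k)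
    {y : W} (hyk : y ^ k = 1) (hy : ∀ m, rLen cs (y ^ m) ≤ 2) (ω : List B) (lam r : ℕ)
    (hr : 1 ≤ r) :
    rLen cs ((cs.simple a * cs.simple b * y) ^ lam * cs.wordProd ((a :: b :: ω).take r)) +
      2 * ((lam + (if 2 ≤ r then 1 else 0) - 1) / (k - 1)) ≤ 2 * lam + r := by
  set x := cs.simple a * cs.simple b
  have hxk : x ^ k = 1 := hab ▸ cs.simple_mul_simple_pow a b
  have hx := cs.rLen_simple_mul_simple_pow_le a b
  obtain rfl | ⟨r, rfl⟩ : r = 1 ∨ ∃ r', r = r' + 2 := by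
    rcases r with _ | _ | r <;> simp_all
  · rcases lam with _ | lam
    · simpa using cs.rLen_simple_le a
    have hst : cs.simple a * x = cs.simple b := by simp [x, ← mul_assoc]
    have := cs.rLen_mul_pow_succ_mul_add_two_mul_div_le hk hxk hyk hx hy hst lam
    grw [cs.rLen_simple_le] at this
    simp only [List.take_succ_cons, List.take_zero, wordProd_cons, wordProd_nil, mul_one,
      Nat.not_succ_le_self, if_false, add_zero, Nat.add_sub_cancel]
    omega
  · rw [List.take_succ_cons, List.take_succ_cons, wordProd_cons, wordProd_cons,
      if_pos (by omega), Nat.add_sub_cancel, ← mul_assoc (cs.simple a), ← mul_assoc,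
      show cs.simple a * cs.simple b = x from rfl]
    grw [cs.rLen_mul_le, rLen_wordProd_le, List.length_take]
    have := cs.rLen_mul_pow_mul_add_two_mul_div_le hk hxk hyk hx hy lam
    omega

theorem rLen_wordProd_pow_mul_wordProd_take_add_le {k : ℕ} (hk : 2 ≤ k) {a b c d : B}
    (hab : M a b = k) (hcd : M c d = k) (t : List B) (lam r : ℕ) (hr : 1 ≤ r) :
    rLen cs (cs.wordProd (a :: b :: c :: d :: t) ^ lam *
        cs.wordProd ((a :: b :: c :: d :: t).take r)) +
      2 * ((lam + (if 2 ≤ r then 1 else 0) - 1) / (k - 1)) ≤ lam * (t.length + 2) + r := by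
  set y := cs.simple c * cs.simple d
  set z := cs.simple a * cs.simple b * y
  have hω : cs.wordProd (a :: b :: c :: d :: t) = z * cs.wordProd t := by
    simp [z, y, wordProd_cons, mul_assoc]
  have hsplit : cs.wordProd (a :: b :: c :: d :: t) ^ lam *
      cs.wordProd ((a :: b :: c :: d :: t).take r) = (cs.wordProd (a :: b :: c :: d :: t) ^ lam *
        (z ^ lam)⁻¹) * (z ^ lam * cs.wordProd ((a :: b :: c :: d :: t).take r)) := by
    group
  have hhead := cs.rLen_mul_pow_mul_wordProd_take_add_le hk hab
    (hcd ▸ cs.simple_mul_simple_pow c d) (cs.rLen_simple_mul_simple_pow_le c d) (c :: d :: t)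
    lam r hr
  have htail : rLen cs (cs.wordProd (a :: b :: c :: d :: t) ^ lam * (z ^ lam)⁻¹)
      ≤ lam * t.length := by
    grw [hω, cs.rLen_mul_pow_mul_inv_pow_le, rLen_wordProd_le]
  rw [hsplit]
  grw [cs.rLen_mul_le, htail]
  linarith

end CoxeterSystem

theorem Nat.ite_le_mul_one_add_sub_div_eq {k : ℕ} (hk : 2 ≤ k) (m : ℕ) :
    (if k ≤ m then 1 else 0) * (1 + (m - k) / (k - 1)) = (m - 1) / (k - 1) := by
  split_ifs with h
  · rw [one_mul, show m - 1 = m - k + (k - 1) by omega, Nat.add_div_right _ (by omega),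
      add_comm]
  · rw [zero_mul, Nat.div_eq_of_lt (by omega)]

theorem reflection_length_upper_bound_high_rank_general {n : ℕ} {W : Type*} [Group W]
    {M : CoxeterMatrix (Fin n)} (cs : CoxeterSystem M W) (k : ℕ) (hk : 3 ≤ k) (hn : 4 ≤ n)
    (hM : ∀ i j, i ≠ j → M.M i j = k) (lam r : ℕ) (hr1 : 1 ≤ r) :
    rLen cs ((cs.wordProd (List.finRange n)) ^ lam * cs.wordProd ((List.finRange n).take r))
      ≤ lam * (n - 2) + r -
          2 * (if k ≤ lam + (if 2 ≤ r then 1 else 0) then 1 else 0) *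
            (1 + (lam + (if 2 ≤ r then 1 else 0) - k) / (k - 1)) := by
  have hnd := List.nodup_finRange n
  have hlen := List.length_finRange (n := n)
  generalize List.finRange n = l at hnd hlen ⊢
  rcases l with _ | ⟨a, _ | ⟨b, _ | ⟨c, _ | ⟨d, t⟩⟩⟩⟩ <;>
    simp only [List.length_cons, List.length_nil] at hlen <;> try omega
  simp only [List.nodup_cons, List.mem_cons, not_or] at hnd
  have := cs.rLen_wordProd_pow_mul_wordProd_take_add_le (by omega) (hM a b hnd.1.1)
    (hM c d hnd.2.2.1.1) t lam r hr1
  rw [mul_assoc, Nat.ite_le_mul_one_add_sub_div_eq (by omega), show n - 2 = t.length + 2 by omega]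
  omega

/-- Upper bound for the reflection length of `(s₁⋯s_n)^λ s₁⋯s_r` in the single braided
Coxeter group of rank `n ≥ 4` with all off-diagonal entries equal to `k ≥ 3`. -/
theorem reflection_length_upper_bound_high_rank {n : ℕ} {W : Type*} [Group W]
    {M : CoxeterMatrix (Fin n)} (cs : CoxeterSystem M W) (k : ℕ) (hk : 3 ≤ k) (hn : 4 ≤ n)
    (hM : ∀ i j, i ≠ j → M.M i j = k) (lam r : ℕ) (hr1 : 1 ≤ r) (hrn : r ≤ n) :
    rLen cs ((cs.wordProd (List.finRange n)) ^ lam * cs.wordProd ((List.finRange n).take r))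
      ≤ lam * (n - 2) + r -
          2 * (if k ≤ lam + (if 2 ≤ r then 1 else 0) then 1 else 0) *
            (1 + (lam + (if 2 ≤ r then 1 else 0) - k) / (k - 1)) :=
  reflection_length_upper_bound_high_rank_general cs k hk hn hM lam r hr1
end
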